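/- Let θ be a compactly supported Borel probability measure on ℝ^m, let n ≥ k ≥ 1, l ≥ 0 and C ≥ 1, and suppose diam(supp θ) ≤ C·2^{-l}. Then (1/n)·H(θ, D_{l+n}) = E_{l ≤ i ≤ l+n}[(1/k)·H(θ_{x,i}, D_{i+k})] + O_C(k/n), i.e. the normalized dyadic entropy at scale l+n equals the average over scales i ∈ {l,...,l+n} and over level-i components θ_{x,i} of the normalized conditional entropies across k further dyadic levels, up to an error of magnitude at most a constant (depending on C, m) times k/n. -/

import Mathlib

open MeasureTheory

/-- The level-`n` dyadic cell of `ℝ^m` with index `z : Fin m → ℤ`, i.e. the product of the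
intervals `[z_j/2^n, (z_j+1)/2^n)`. -/
def dcell {m : ℕ} (n : ℕ) (z : Fin m → ℤ) : Set (EuclideanSpace ℝ (Fin m)) :=
  {y | ∀ j, ⌊(2 : ℝ) ^ n * y j⌋ = z j}

/-- The index of the level-`n` dyadic cell containing `x`. -/
noncomputable def dIndex {m : ℕ} (n : ℕ) (x : EuclideanSpace ℝ (Fin m)) : Fin m → ℤ :=
  fun j => ⌊(2 : ℝ) ^ n * x j⌋

/-- The entropy (base-2) of `θ` with respect to the level-`n` dyadic partition of `ℝ^m`. -/
noncomputable def dyEnt {m : ℕ} (θ : Measure (EuclideanSpace ℝ (Fin m))) (n : ℕ) : ℝ :=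
  ∑' z : Fin m → ℤ, -((θ (dcell n z)).toReal * Real.logb 2 (θ (dcell n z)).toReal)

/-- The level-`i` component of `θ` at `x`: the normalized restriction of `θ` to the
level-`i` dyadic cell containing `x`. -/
noncomputable def dyComp {m : ℕ} (θ : Measure (EuclideanSpace ℝ (Fin m))) (i : ℕ)
    (x : EuclideanSpace ℝ (Fin m)) : Measure (EuclideanSpace ℝ (Fin m)) :=
  (θ (dcell i (dIndex i x)))⁻¹ • θ.restrict (dcell i (dIndex i x))

/-!
Write `H j` for the entropy of `θ` at level `l + j`. Grouping the level-`(i + k)` cells by their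
level-`i` parent gives the chain rule `∫ H(θ_{x,i}, D_{i+k}) dθ(x) = H(θ, D_{i+k}) - H(θ, D_i)`,
so the average on the right telescopes to `(1 / (k (n + 1))) ∑_{t < k} (H (n + 1 + t) - H t)`.
A component at level `i` lives on at most `2 ^ (k m)` cells of level `i + k`, so every increment
`H (a + d) - H a` lies in `[0, d m]`; hence each `H (n + 1 + t) - H t` is `H n - H 0` up to
`O(k m)`. Finally `H 0 ≤ m log₂ (2 ⌈C⌉ + 1)`, as the support of `θ` meets at most
`(2 ⌈C⌉ + 1) ^ m` cells of level `l`, and both sides of the formula are `H n / n + O(k / n)`.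
-/

open Real Finset Function

section NegMulLog

variable {ι : Type*} {s : Finset ι} {q : ι → ℝ}

lemma sum_negMulLog_nonneg (hq : ∀ i ∈ s, 0 ≤ q i) (hsum : ∑ i ∈ s, q i = 1) :
    0 ≤ ∑ i ∈ s, negMulLog (q i) :=
  sum_nonneg fun i hi => negMulLog_nonneg (hq i hi) (hsum ▸ single_le_sum hq hi)

lemma sum_negMulLog_le_log_card (hq : ∀ i ∈ s, 0 ≤ q i) (hsum : ∑ i ∈ s, q i = 1) :
    ∑ i ∈ s, negMulLog (q i) ≤ log #s := by
  have hN : (0 : ℝ) < #s := by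
    rw [Nat.cast_pos, card_pos]
    exact nonempty_of_sum_ne_zero (hsum ▸ one_ne_zero)
  have jensen := concaveOn_negMulLog.le_map_sum (t := s) (w := fun _ => (#s : ℝ)⁻¹)
    (fun _ _ => by positivity) (by simp [hN.ne']) hq
  simp only [smul_eq_mul, ← mul_sum, hsum, mul_one] at jensen
  rw [negMulLog, log_inv] at jensen
  nlinarith [mul_inv_cancel₀ hN.ne']

lemma mul_sum_negMulLog_div_sum (hq : ∀ i ∈ s, 0 ≤ q i) :
    (∑ i ∈ s, q i) * ∑ i ∈ s, negMulLog (q i / ∑ j ∈ s, q j) =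
      ∑ i ∈ s, negMulLog (q i) - negMulLog (∑ i ∈ s, q i) := by
  set p := ∑ i ∈ s, q i with hp
  rcases eq_or_ne p 0 with hp0 | hp0
  · have hq0 := (sum_eq_zero_iff_of_nonneg hq).1 hp0
    rw [hp0, zero_mul, negMulLog_zero, sub_zero,
      sum_eq_zero fun i hi => by rw [hq0 i hi, negMulLog_zero]]
  · have hsplit : ∀ i, negMulLog (q i) = q i / p * negMulLog p + p * negMulLog (q i / p) := by
      intro i
      rw [← negMulLog_mul, mul_div_cancel₀ _ hp0]
    simp only [hsplit, sum_add_distrib, ← sum_mul, ← mul_sum, ← sum_div, ← hp, div_self hp0]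
    ring

lemma sum_negMulLog_div_sum_nonneg (hq : ∀ i ∈ s, 0 ≤ q i) :
    0 ≤ ∑ i ∈ s, negMulLog (q i / ∑ j ∈ s, q j) := by
  rcases eq_or_ne (∑ j ∈ s, q j) 0 with hp | hp
  · simp [hp]
  · exact sum_negMulLog_nonneg (fun i hi => div_nonneg (hq i hi) (sum_nonneg hq))
      (by rw [← sum_div, div_self hp])

lemma sum_negMulLog_div_sum_le_log_card (hq : ∀ i ∈ s, 0 ≤ q i) :
    ∑ i ∈ s, negMulLog (q i / ∑ j ∈ s, q j) ≤ log #s := by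
  rcases eq_or_ne (∑ j ∈ s, q j) 0 with hp | hp
  · simpa [hp] using log_natCast_nonneg #s
  · exact sum_negMulLog_le_log_card (fun i hi => div_nonneg (hq i hi) (sum_nonneg hq))
      (by rw [← sum_div, div_self hp])

end NegMulLog

lemma sum_range_sub_shift {G : Type*} [AddCommGroup G] (h : ℕ → G) (N k : ℕ) :
    ∑ j ∈ range N, (h (j + k) - h j) = ∑ t ∈ range k, (h (N + t) - h t) := by
  have telescope (a b : ℕ) : ∑ t ∈ range b, (h (a + (t + 1)) - h (a + t)) = h (a + b) - h a := by
    simpa using sum_range_sub (fun t => h (a + t)) b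
  calc ∑ j ∈ range N, (h (j + k) - h j)
      = ∑ j ∈ range N, ∑ t ∈ range k, (h (j + (t + 1)) - h (j + t)) := by simp only [telescope]
    _ = ∑ t ∈ range k, ∑ j ∈ range N, (h (t + (j + 1)) - h (t + j)) := by
        rw [sum_comm]; simp only [add_comm, add_left_comm]
    _ = ∑ t ∈ range k, (h (N + t) - h t) := by simp only [telescope, add_comm]

section BoundedIncrements

variable {h : ℕ → ℝ} {L : ℝ}

lemma abs_sum_range_sub_shift_sub_le (hinc : ∀ a d : ℕ, |h (a + d) - h a| ≤ L * d) (n k : ℕ) :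
    |∑ t ∈ range k, (h (n + 1 + t) - h t) - k * (h n - h 0)| ≤ k * (2 * k * L) := by
  have hL : 0 ≤ L := by simpa using (abs_nonneg _).trans (hinc 0 1)
  have hterm (t : ℕ) (ht : t ∈ range k) : |h (n + 1 + t) - h t - (h n - h 0)| ≤ 2 * k * L := by
    have ht : (t : ℝ) + 1 ≤ k := by exact_mod_cast mem_range.1 ht
    have hn := hinc n (1 + t)
    have h0 := hinc 0 t
    rw [← add_assoc, Nat.cast_add, Nat.cast_one] at hn
    rw [zero_add] at h0
    calc |h (n + 1 + t) - h t - (h n - h 0)| = |(h (n + 1 + t) - h n) - (h t - h 0)| := by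
            congr 1; ring
      _ ≤ |h (n + 1 + t) - h n| + |h t - h 0| := abs_sub _ _
      _ ≤ 2 * k * L := by nlinarith [mul_le_mul_of_nonneg_left ht hL]
  calc |∑ t ∈ range k, (h (n + 1 + t) - h t) - k * (h n - h 0)|
      = |∑ t ∈ range k, (h (n + 1 + t) - h t - (h n - h 0))| := by
        rw [sum_sub_distrib (g := fun _ => h n - h 0), sum_const, card_range, nsmul_eq_mul]
    _ ≤ ∑ t ∈ range k, |h (n + 1 + t) - h t - (h n - h 0)| := abs_sum_le_sum_abs _ _
    _ ≤ ∑ t ∈ range k, 2 * k * L := sum_le_sum hterm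
    _ = k * (2 * k * L) := by simp

lemma abs_sub_average_increment_le {K₀ : ℝ} (hinc : ∀ a d : ℕ, |h (a + d) - h a| ≤ L * d)
    (h0 : |h 0| ≤ K₀) {n k : ℕ} (hk : 1 ≤ k) (hkn : k ≤ n) :
    |1 / n * h n - 1 / (n + 1) * ∑ j ∈ range (n + 1), 1 / k * (h (j + k) - h j)| ≤
      (2 * K₀ + 3 * L) * k / n := by
  have hk' : (1 : ℝ) ≤ k := by exact_mod_cast hk
  have hn : (0 : ℝ) < n := by exact_mod_cast (by omega : 0 < n)
  have hL : 0 ≤ L := by simpa using (abs_nonneg _).trans (hinc 0 1)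
  have hK₀ : 0 ≤ K₀ := (abs_nonneg _).trans h0
  have hhn : |h n| ≤ K₀ + n * L := by
    have := hinc 0 n
    rw [zero_add] at this
    linarith [abs_sub_abs_le_abs_sub (h n) (h 0)]
  set E := ∑ t ∈ range k, (h (n + 1 + t) - h t) - k * (h n - h 0) with hE_def
  have hE : |E| ≤ k * (2 * k * L) := abs_sum_range_sub_shift_sub_le hinc n k
  have hsplit : 1 / (n : ℝ) * h n - 1 / (n + 1) * ∑ j ∈ range (n + 1), 1 / k * (h (j + k) - h j) =
      h n / (n * (n + 1)) + h 0 / (n + 1) - E / (k * (n + 1)) := by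
    rw [← mul_sum, sum_range_sub_shift, hE_def]
    field_simp
    ring
  rw [hsplit]
  calc |h n / (n * (n + 1)) + h 0 / (n + 1) - E / (k * (n + 1))|
      ≤ |h n / (n * (n + 1))| + |h 0 / (n + 1)| + |E / (k * (n + 1))| :=
        (abs_sub _ _).trans (add_le_add_left (abs_add_le _ _) _)
    _ = |h n| / (n * (n + 1)) + |h 0| / (n + 1) + |E| / (k * (n + 1)) := by
        simp only [abs_div, abs_of_pos (by positivity : (0 : ℝ) < n + 1),
          abs_of_pos (by positivity : (0 : ℝ) < n * (n + 1)),
          abs_of_pos (by positivity : (0 : ℝ) < k * (n + 1))]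
    _ ≤ (K₀ + n * L) / (n * (n + 1)) + K₀ / (n + 1) + k * (2 * k * L) / (k * (n + 1)) := by
        gcongr
    _ = (K₀ + n * L + n * K₀ + 2 * k * n * L) / (n * (n + 1)) := by
        field_simp
    _ ≤ (2 * K₀ + 3 * L) * k * (n + 1) / (n * (n + 1)) := by
        gcongr
        nlinarith [mul_nonneg hK₀ (sub_nonneg.2 hk'), mul_nonneg hL (sub_nonneg.2 hk'),
          mul_nonneg (mul_nonneg hK₀ (sub_nonneg.2 hk')) hn.le,
          mul_nonneg (mul_nonneg hL (sub_nonneg.2 hk')) hn.le]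
    _ = (2 * K₀ + 3 * L) * k / n := by
        field_simp

end BoundedIncrements

lemma Int.floor_eq_iff_floor_two_pow_mul_mem_Icc (r : ℝ) (a : ℤ) (k : ℕ) :
    ⌊r⌋ = a ↔ ⌊2 ^ k * r⌋ ∈ Icc (2 ^ k * a) (2 ^ k * a + (2 ^ k - 1)) := by
  have h2k : (0 : ℝ) < 2 ^ k := by positivity
  rw [Int.floor_eq_iff, mem_Icc, Int.le_floor, ← Int.lt_add_one_iff, add_assoc, sub_add_cancel,
    Int.floor_lt]
  push_cast
  rw [mul_le_mul_iff_right₀ h2k, ← mul_add_one, mul_lt_mul_iff_right₀ h2k]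

section DyadicCells

variable {m : ℕ}

/-- Indices of the level-`(i + k)` cells contained in the level-`i` cell of index `z`, for
every `i`. -/
noncomputable def dChildren (k : ℕ) (z : Fin m → ℤ) : Finset (Fin m → ℤ) :=
  Icc (fun j => 2 ^ k * z j) (fun j => 2 ^ k * z j + (2 ^ k - 1))

lemma card_dChildren (k : ℕ) (z : Fin m → ℤ) : #(dChildren k z) = 2 ^ (k * m) := by
  have hside (a : ℤ) : (a + (2 ^ k - 1) + 1 - a).toNat = 2 ^ k := by
    rw [add_assoc, sub_add_cancel, add_sub_cancel_left]
    exact_mod_cast Int.toNat_natCast (2 ^ k)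
  simp [dChildren, Pi.card_Icc, hside, pow_mul]

lemma mem_dcell_iff {n : ℕ} {z : Fin m → ℤ} {x : EuclideanSpace ℝ (Fin m)} :
    x ∈ dcell n z ↔ dIndex n x = z := by
  simp [dcell, dIndex, funext_iff]

lemma mem_dcell_dIndex (n : ℕ) (x : EuclideanSpace ℝ (Fin m)) : x ∈ dcell n (dIndex n x) :=
  mem_dcell_iff.2 rfl

lemma measurable_dIndex (n : ℕ) : Measurable (dIndex (m := m) n) :=
  measurable_pi_lambda _ fun j =>
    ((measurable_const.mul ((measurable_pi_apply j).comp (WithLp.measurable_ofLp 2 _)))).floor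

lemma measurableSet_dcell (n : ℕ) (z : Fin m → ℤ) : MeasurableSet (dcell (m := m) n z) := by
  have : dcell (m := m) n z = dIndex n ⁻¹' {z} := by ext; exact mem_dcell_iff
  exact this ▸ measurable_dIndex n (measurableSet_singleton z)

lemma pairwise_disjoint_dcell (n : ℕ) : Pairwise (Disjoint on (dcell (m := m) n)) :=
  fun _ _ hne => Set.disjoint_left.2 fun _ hx hx' =>
    hne ((mem_dcell_iff.1 hx).symm.trans (mem_dcell_iff.1 hx'))

lemma dcell_nonempty (n : ℕ) (z : Fin m → ℤ) : (dcell (m := m) n z).Nonempty :=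
  ⟨WithLp.toLp 2 fun j => z j / 2 ^ n, fun j => by
    show ⌊(2 : ℝ) ^ n * (z j / 2 ^ n)⌋ = z j
    rw [mul_div_cancel₀ _ (by positivity), Int.floor_intCast]⟩

lemma mem_dcell_iff_dIndex_mem_dChildren {i k : ℕ} {z : Fin m → ℤ}
    {x : EuclideanSpace ℝ (Fin m)} : x ∈ dcell i z ↔ dIndex (i + k) x ∈ dChildren k z := by
  rw [mem_dcell_iff, funext_iff]
  simp only [dChildren, dIndex, mem_Icc, Pi.le_def, ← forall_and,
    Int.floor_eq_iff_floor_two_pow_mul_mem_Icc _ _ k, pow_add, mul_comm ((2 : ℝ) ^ i),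
    mul_assoc]

lemma dcell_eq_biUnion_dChildren (i k : ℕ) (z : Fin m → ℤ) :
    dcell i z = ⋃ w ∈ dChildren k z, dcell (m := m) (i + k) w := by
  ext x
  rw [mem_dcell_iff_dIndex_mem_dChildren (k := k)]
  simp only [Set.mem_iUnion, exists_prop, mem_dcell_iff, exists_eq_right']

lemma dcell_subset_of_mem_dChildren {i k : ℕ} {z w : Fin m → ℤ} (hw : w ∈ dChildren k z) :
    dcell (i + k) w ⊆ dcell (m := m) i z := by
  rw [dcell_eq_biUnion_dChildren i k z]
  exact Set.subset_biUnion_of_mem (u := fun w => dcell (i + k) w) hw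

lemma pairwise_disjoint_dChildren (k : ℕ) : Pairwise (Disjoint on (dChildren (m := m) k)) := by
  refine fun z z' hne => disjoint_left.2 fun w hw hw' => ?_
  obtain ⟨x, hx⟩ := dcell_nonempty (m := m) (0 + k) w
  exact Set.disjoint_left.1 (pairwise_disjoint_dcell 0 hne)
    (dcell_subset_of_mem_dChildren hw hx) (dcell_subset_of_mem_dChildren hw' hx)

end DyadicCells

section DyadicEntropy

variable {m : ℕ} {μ θ : Measure (EuclideanSpace ℝ (Fin m))}

lemma dyEnt_eq_tsum (n : ℕ) :
    dyEnt μ n = (∑' z, negMulLog (μ.real (dcell n z))) / log 2 := by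
  rw [dyEnt, ← tsum_div_const]
  congr 1
  ext z
  rw [negMulLog, logb, measureReal_def]
  ring

lemma dyEnt_eq_sum {n : ℕ} {S : Finset (Fin m → ℤ)} (hS : ∀ z ∉ S, μ (dcell n z) = 0) :
    dyEnt μ n = (∑ z ∈ S, negMulLog (μ.real (dcell n z))) / log 2 := by
  rw [dyEnt_eq_tsum, tsum_eq_sum fun z hz => by simp [measureReal_def, hS z hz]]

lemma measure_dcell_eq_zero_of_ae_dIndex_mem {n : ℕ} {S : Finset (Fin m → ℤ)}
    (hS : ∀ᵐ x ∂μ, dIndex n x ∈ S) {z : Fin m → ℤ} (hz : z ∉ S) : μ (dcell n z) = 0 :=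
  measure_mono_null (fun x hx => by simpa [mem_dcell_iff.1 hx] using hz) (ae_iff.1 hS)

lemma ae_dIndex_add_mem_biUnion_dChildren {i k : ℕ} {S : Finset (Fin m → ℤ)}
    (hS : ∀ᵐ x ∂μ, dIndex i x ∈ S) : ∀ᵐ x ∂μ, dIndex (i + k) x ∈ S.biUnion (dChildren k) := by
  filter_upwards [hS] with x hx
  exact mem_biUnion.2 ⟨_, hx, mem_dcell_iff_dIndex_mem_dChildren.1 (mem_dcell_dIndex i x)⟩

lemma integral_comp_dIndex [IsFiniteMeasure μ] {n : ℕ} {S : Finset (Fin m → ℤ)}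
    (hS : ∀ᵐ x ∂μ, dIndex n x ∈ S) (f : (Fin m → ℤ) → ℝ) :
    ∫ x, f (dIndex n x) ∂μ = ∑ z ∈ S, μ.real (dcell n z) * f z := by
  have hae : (fun x => f (dIndex n x)) =ᵐ[μ]
      fun x => ∑ z ∈ S, (dcell n z).indicator (fun _ => f z) x := by
    filter_upwards [hS] with x hx
    rw [sum_eq_single_of_mem _ hx fun z _ hz => Set.indicator_of_notMem
      (fun h => hz (mem_dcell_iff.1 h).symm) _, Set.indicator_of_mem (mem_dcell_dIndex n x)]
  rw [integral_congr_ae hae, integral_finsetSum _ fun z _ =>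
    (integrable_const (f z)).indicator (measurableSet_dcell n z)]
  simp only [integral_indicator_const _ (measurableSet_dcell n _), smul_eq_mul]

lemma sum_measureReal_dcell [IsProbabilityMeasure μ] {n : ℕ} {S : Finset (Fin m → ℤ)}
    (hS : ∀ᵐ x ∂μ, dIndex n x ∈ S) : ∑ z ∈ S, μ.real (dcell n z) = 1 := by
  simpa using (integral_comp_dIndex hS fun _ => 1).symm

lemma dyEnt_nonneg [IsProbabilityMeasure μ] {n : ℕ} {S : Finset (Fin m → ℤ)}
    (hS : ∀ᵐ x ∂μ, dIndex n x ∈ S) : 0 ≤ dyEnt μ n := by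
  rw [dyEnt_eq_sum fun z hz => measure_dcell_eq_zero_of_ae_dIndex_mem hS hz]
  exact div_nonneg (sum_negMulLog_nonneg (fun _ _ => measureReal_nonneg)
    (sum_measureReal_dcell hS)) (log_nonneg one_le_two)

lemma dyEnt_le_logb_card [IsProbabilityMeasure μ] {n : ℕ} {S : Finset (Fin m → ℤ)}
    (hS : ∀ᵐ x ∂μ, dIndex n x ∈ S) : dyEnt μ n ≤ logb 2 #S := by
  rw [dyEnt_eq_sum fun z hz => measure_dcell_eq_zero_of_ae_dIndex_mem hS hz, logb]
  exact div_le_div_of_nonneg_right (sum_negMulLog_le_log_card (fun _ _ => measureReal_nonneg)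
    (sum_measureReal_dcell hS)) (log_nonneg one_le_two)

lemma measureReal_dcell_eq_sum_dChildren (θ : Measure (EuclideanSpace ℝ (Fin m)))
    [IsFiniteMeasure θ] (i k : ℕ) (z : Fin m → ℤ) :
    θ.real (dcell i z) = ∑ w ∈ dChildren k z, θ.real (dcell (i + k) w) := by
  rw [dcell_eq_biUnion_dChildren i k z, measureReal_biUnion_finset
    ((pairwise_disjoint_dcell _).set_pairwise _) fun w _ => measurableSet_dcell _ _]

lemma dyEnt_dyComp (θ : Measure (EuclideanSpace ℝ (Fin m))) (i k : ℕ)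
    (x : EuclideanSpace ℝ (Fin m)) :
    dyEnt (dyComp θ i x) (i + k) = (∑ w ∈ dChildren k (dIndex i x),
      negMulLog (θ.real (dcell (i + k) w) / θ.real (dcell i (dIndex i x)))) / log 2 := by
  set z := dIndex i x
  have happly (w : Fin m → ℤ) : dyComp θ i x (dcell (i + k) w) =
      (θ (dcell i z))⁻¹ * θ (dcell (i + k) w ∩ dcell i z) := by
    rw [dyComp, Measure.smul_apply, Measure.restrict_apply (measurableSet_dcell _ _), smul_eq_mul]
  have hout (w : Fin m → ℤ) (hw : w ∉ dChildren k z) : dcell (i + k) w ∩ dcell i z = ∅ :=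
    Set.eq_empty_of_forall_notMem fun y ⟨hyw, hyz⟩ =>
      hw (mem_dcell_iff.1 hyw ▸ mem_dcell_iff_dIndex_mem_dChildren.1 hyz)
  rw [dyEnt_eq_sum (S := dChildren k z) fun w hw => by
    rw [happly, hout w hw, measure_empty, mul_zero]]
  refine congrArg (· / log 2) (sum_congr rfl fun w hw => ?_)
  rw [measureReal_def, happly, Set.inter_eq_left.2 (dcell_subset_of_mem_dChildren hw),
    ENNReal.toReal_mul, ENNReal.toReal_inv, inv_mul_eq_div, measureReal_def, measureReal_def]

lemma dyEnt_dyComp_nonneg [IsFiniteMeasure θ] (i k : ℕ) (x : EuclideanSpace ℝ (Fin m)) :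
    0 ≤ dyEnt (dyComp θ i x) (i + k) := by
  rw [dyEnt_dyComp, measureReal_dcell_eq_sum_dChildren θ i k]
  exact div_nonneg (sum_negMulLog_div_sum_nonneg fun _ _ => measureReal_nonneg)
    (log_nonneg one_le_two)

lemma dyEnt_dyComp_le [IsFiniteMeasure θ] (i k : ℕ) (x : EuclideanSpace ℝ (Fin m)) :
    dyEnt (dyComp θ i x) (i + k) ≤ k * m := by
  rw [dyEnt_dyComp, measureReal_dcell_eq_sum_dChildren θ i k, div_le_iff₀ (log_pos one_lt_two)]
  calc _ ≤ log #(dChildren k (dIndex i x)) :=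
        sum_negMulLog_div_sum_le_log_card fun _ _ => measureReal_nonneg
    _ = k * m * log 2 := by
        rw [card_dChildren, Nat.cast_pow, log_pow, Nat.cast_ofNat, Nat.cast_mul]

theorem integral_dyEnt_dyComp [IsFiniteMeasure θ] {i k : ℕ} {S : Finset (Fin m → ℤ)}
    (hS : ∀ᵐ x ∂θ, dIndex i x ∈ S) :
    ∫ x, dyEnt (dyComp θ i x) (i + k) ∂θ = dyEnt θ (i + k) - dyEnt θ i := by
  have hsupp := ae_dIndex_add_mem_biUnion_dChildren (k := k) hS
  simp_rw [dyEnt_dyComp]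
  rw [integral_comp_dIndex hS (fun z => (∑ w ∈ dChildren k z,
      negMulLog (θ.real (dcell (i + k) w) / θ.real (dcell i z))) / log 2),
    dyEnt_eq_sum fun w hw => measure_dcell_eq_zero_of_ae_dIndex_mem hsupp hw,
    dyEnt_eq_sum fun z hz => measure_dcell_eq_zero_of_ae_dIndex_mem hS hz,
    sum_biUnion ((pairwise_disjoint_dChildren k).set_pairwise _), ← sub_div, ← sum_sub_distrib,
    sum_div]
  refine sum_congr rfl fun z _ => ?_
  rw [mul_div_assoc', measureReal_dcell_eq_sum_dChildren θ i k z,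
    mul_sum_negMulLog_div_sum fun _ _ => measureReal_nonneg]

lemma abs_dyEnt_add_sub_le [IsProbabilityMeasure θ] {i k : ℕ} {S : Finset (Fin m → ℤ)}
    (hS : ∀ᵐ x ∂θ, dIndex i x ∈ S) : |dyEnt θ (i + k) - dyEnt θ i| ≤ k * m := by
  rw [← integral_dyEnt_dyComp hS, ← Real.norm_eq_abs]
  simpa using norm_integral_le_of_norm_le_const (μ := θ) (ae_of_all _ fun x =>
    (Real.norm_of_nonneg (dyEnt_dyComp_nonneg i k x)).trans_le (dyEnt_dyComp_le i k x))

end DyadicEntropy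

section Boxes

variable {m : ℕ}

lemma dIndex_mem_Icc_of_dist_le {n : ℕ} {x y : EuclideanSpace ℝ (Fin m)} {c : ℝ}
    (h : dist x y ≤ c * 2 ^ (-(n : ℤ))) :
    dIndex n x ∈ Icc (dIndex n y - fun _ => (⌈c⌉₊ : ℤ)) (dIndex n y + fun _ => (⌈c⌉₊ : ℤ)) := by
  have hcoord (j : Fin m) : |2 ^ n * x j - 2 ^ n * y j| ≤ ⌈c⌉₊ := by
    rw [← mul_sub, abs_mul, abs_of_pos (by positivity)]
    calc 2 ^ n * |x j - y j| ≤ 2 ^ n * (c * 2 ^ (-(n : ℤ))) := by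
          gcongr
          exact (Real.dist_eq _ _ ▸ PiLp.dist_apply_le x y j).trans h
      _ = c := by rw [zpow_neg, zpow_natCast]; field_simp
      _ ≤ ⌈c⌉₊ := Nat.le_ceil c
  simp only [mem_Icc, Pi.le_def, Pi.sub_apply, Pi.add_apply, dIndex]
  refine ⟨fun j => ?_, fun j => ?_⟩
  · rw [← Int.floor_sub_natCast]
    exact Int.floor_le_floor (by linarith [(abs_le.1 (hcoord j)).1])
  · rw [← Int.floor_add_natCast]
    exact Int.floor_le_floor (by linarith [(abs_le.1 (hcoord j)).2])

lemma card_Icc_sub_add (a : Fin m → ℤ) (c : ℕ) :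
    #(Icc (a - fun _ => (c : ℤ)) (a + fun _ => (c : ℤ))) = (2 * c + 1) ^ m := by
  have hside (t : ℤ) : (t + c + 1 - (t - c)).toNat = 2 * c + 1 := by omega
  simp [Pi.card_Icc, hside]

lemma exists_ae_dIndex_mem_of_diam_le {μ : Measure (EuclideanSpace ℝ (Fin m))} [NeZero μ]
    {s : Set (EuclideanSpace ℝ (Fin m))} (hs : Bornology.IsBounded s) (hμs : μ sᶜ = 0) {n : ℕ}
    {c : ℝ} (hdiam : Metric.diam s ≤ c * 2 ^ (-(n : ℤ))) :
    ∃ S : Finset (Fin m → ℤ), #S = (2 * ⌈c⌉₊ + 1) ^ m ∧ ∀ᵐ x ∂μ, dIndex n x ∈ S := by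
  have hs_ae : ∀ᵐ x ∂μ, x ∈ s := mem_ae_iff.2 hμs
  obtain ⟨x₀, hx₀⟩ := hs_ae.exists
  refine ⟨_, card_Icc_sub_add (dIndex n x₀) ⌈c⌉₊, ?_⟩
  filter_upwards [hs_ae] with x hx
  exact dIndex_mem_Icc_of_dist_le ((Metric.dist_le_diam_of_mem hs hx hx₀).trans hdiam)

end Boxes

theorem multiscale_entropy_formula_general (m : ℕ) (C : ℝ) :
    ∃ K : ℝ, 0 < K ∧
      ∀ (θ : Measure (EuclideanSpace ℝ (Fin m))) [IsProbabilityMeasure θ],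
      ∀ n k l : ℕ, 1 ≤ k → k ≤ n →
      (∃ s : Set (EuclideanSpace ℝ (Fin m)), IsCompact s ∧ θ sᶜ = 0 ∧
        Metric.diam s ≤ C * (2 : ℝ) ^ (-(l : ℤ))) →
      |(1 / (n : ℝ)) * dyEnt θ (l + n) -
          (1 / ((n : ℝ) + 1)) * ∑ i ∈ Finset.Icc l (l + n),
            ∫ x, (1 / (k : ℝ)) * dyEnt (dyComp θ i x) (i + k) ∂θ| ≤
        K * (k : ℝ) / (n : ℝ) := by
  set K₀ : ℝ := m * logb 2 (2 * ⌈C⌉₊ + 1)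
  have hK₀ : 0 ≤ K₀ := mul_nonneg m.cast_nonneg (logb_nonneg one_lt_two (by
    linarith [(⌈C⌉₊.cast_nonneg : (0 : ℝ) ≤ ⌈C⌉₊)]))
  refine ⟨2 * K₀ + 3 * m + 1, by positivity, fun θ _ n k l hk hkn ⟨s, hs, hθs, hdiam⟩ => ?_⟩
  obtain ⟨S, hcard, hS⟩ := exists_ae_dIndex_mem_of_diam_le hs.isBounded hθs hdiam
  set h : ℕ → ℝ := fun j => dyEnt θ (l + j) with h_def
  have hinc (a d : ℕ) : |h (a + d) - h a| ≤ m * d := by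
    simpa [h_def, add_assoc, mul_comm] using
      abs_dyEnt_add_sub_le (k := d) (ae_dIndex_add_mem_biUnion_dChildren (k := a) hS)
  have h0 : |h 0| ≤ K₀ := by
    show |dyEnt θ (l + 0)| ≤ K₀
    rw [add_zero, abs_of_nonneg (dyEnt_nonneg hS)]
    refine (dyEnt_le_logb_card hS).trans_eq ?_
    rw [hcard, Nat.cast_pow, logb_pow]
    push_cast
    rfl
  have hsum : ∑ i ∈ Finset.Icc l (l + n), ∫ x, 1 / (k : ℝ) * dyEnt (dyComp θ i x) (i + k) ∂θ =
      ∑ j ∈ range (n + 1), 1 / (k : ℝ) * (h (j + k) - h j) := by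
    rw [← Ico_add_one_right_eq_Icc, sum_Ico_eq_sum_range, show l + n + 1 - l = n + 1 by omega]
    refine sum_congr rfl fun j _ => ?_
    rw [integral_const_mul, integral_dyEnt_dyComp (ae_dIndex_add_mem_biUnion_dChildren hS)]
    simp [h_def, add_assoc]
  rw [hsum]
  calc _ ≤ (2 * K₀ + 3 * m) * k / n := abs_sub_average_increment_le hinc h0 hk hkn
    _ ≤ _ := by gcongr ?_ * _ / _; linarith

/-- Multiscale entropy formula: for a compactly supported probability measure `θ` on `ℝ^m`
with `diam(supp θ) ≤ C·2^{-l}`, and `n ≥ k ≥ 1`,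
`(1/n)·H(θ, D_{l+n}) = E_{l ≤ i ≤ l+n}[(1/k)·H(θ_{x,i}, D_{i+k})] + O_C(k/n)`:
the normalized dyadic entropy at scale `l+n` equals the average over scales
`i ∈ {l,...,l+n}` and over level-`i` components of the normalized entropies across `k`
further dyadic levels, up to an error at most a constant (depending on `C` and `m`)
times `k/n`. -/
theorem multiscale_entropy_formula (m : ℕ) (C : ℝ) (hC : 1 ≤ C) :
    ∃ K : ℝ, 0 < K ∧
      ∀ (θ : Measure (EuclideanSpace ℝ (Fin m))) [IsProbabilityMeasure θ],
      ∀ n k l : ℕ, 1 ≤ k → k ≤ n →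
      (∃ s : Set (EuclideanSpace ℝ (Fin m)), IsCompact s ∧ θ sᶜ = 0 ∧
        Metric.diam s ≤ C * (2 : ℝ) ^ (-(l : ℤ))) →
      |(1 / (n : ℝ)) * dyEnt θ (l + n) -
          (1 / ((n : ℝ) + 1)) * ∑ i ∈ Finset.Icc l (l + n),
            ∫ x, (1 / (k : ℝ)) * dyEnt (dyComp θ i x) (i + k) ∂θ| ≤
        K * (k : ℝ) / (n : ℝ) :=
  multiscale_entropy_formula_general m C
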